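/- Exact value of a_n: for every integer n ≥ 1 and every real t > 0, a_n(t) = π^{n/2} · t^{n/2} / Γ(n/2 + 1), where Γ is the Gamma function. -/

import Mathlib

/-!
Integrating out the first coordinate, the Dirichlet integral
`D_α(t) = ∫_{s ≥ 0, ∑ sᵢ ≤ t} ∏ sᵢ^(αᵢ - 1) ds` satisfies
`D_{(a, α')}(t) = ∫₀ᵗ x^(a - 1) D_{α'}(t - x) dx`. By induction `D_{α'}(u)` is a constant times
`u^(∑ α')`, so this is a Beta integral, and one finds
`D_α(t) = t^(∑ α) ∏ Γ(αᵢ) / Γ(∑ α + 1)`. The theorem is the case `αᵢ = 1/2`, where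
`∏ Γ(1/2) = π^(n/2)`.
-/

open MeasureTheory

/-- `a_n(t) = ∫_{[0,t]^n} 1{s₁+⋯+sₙ ≤ t} ∏ᵢ sᵢ^{-1/2} ds` (Lebesgue/Bochner integral with
respect to the volume on `Fin n → ℝ`). -/
noncomputable def aFun (n : ℕ) (t : ℝ) : ℝ :=
  ∫ s in Set.univ.pi (fun _ : Fin n => Set.Icc (0 : ℝ) t),
    (if (∑ i, s i) ≤ t then ∏ i, (s i) ^ (-(1 : ℝ) / 2) else 0)

open Set
open scoped ENNReal

theorem integral_rpow_mul_sub_rpow {a b t : ℝ} (ha : 0 < a) (hb : 0 < b) (ht : 0 < t) :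
    ∫ x in 0..t, x ^ (a - 1) * (t - x) ^ (b - 1) =
      t ^ (a + b - 1) * ProbabilityTheory.beta a b := by
  have hscaled := Complex.betaIntegral_scaled a b ht
  have hcpow : ∀ x ∈ uIcc 0 t, ((x ^ (a - 1) * (t - x) ^ (b - 1) : ℝ) : ℂ)
      = (x : ℂ) ^ ((a : ℂ) - 1) * ((t : ℂ) - x) ^ ((b : ℂ) - 1) := by
    intro x hx
    rw [uIcc_of_le ht.le] at hx
    push_cast
    rw [Complex.ofReal_cpow hx.1, Complex.ofReal_cpow (sub_nonneg.2 hx.2)]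
    push_cast
    ring
  rw [← intervalIntegral.integral_congr hcpow, intervalIntegral.integral_ofReal] at hscaled
  have hre := congrArg Complex.re hscaled
  rw [Complex.ofReal_re] at hre
  rw [hre, ProbabilityTheory.beta_eq_betaIntegralReal a b ha hb, ← Complex.ofReal_one,
    ← Complex.ofReal_add, ← Complex.ofReal_sub, ← Complex.ofReal_cpow ht.le,
    Complex.re_ofReal_mul]

theorem setLIntegral_Ioo_rpow_mul_sub_rpow {a b t : ℝ} (ha : 0 < a) (hb : 0 < b) (ht : 0 < t) :
    ∫⁻ x in Ioo 0 t, ENNReal.ofReal (x ^ (a - 1) * (t - x) ^ (b - 1))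
      = ENNReal.ofReal (t ^ (a + b - 1) * ProbabilityTheory.beta a b) := by
  have hval := integral_rpow_mul_sub_rpow ha hb ht
  -- a nonzero integral forces integrability
  have hint : IntervalIntegrable (fun x => x ^ (a - 1) * (t - x) ^ (b - 1)) volume 0 t :=
    intervalIntegral.intervalIntegrable_of_integral_ne_zero <| by
      rw [hval]
      exact (mul_pos (by positivity) (ProbabilityTheory.beta_pos ha hb)).ne'
  rw [intervalIntegral.integral_of_le ht.le, integral_Ioc_eq_integral_Ioo] at hval
  rw [← hval, ofReal_integral_eq_lintegral_ofReal]
  · exact (intervalIntegrable_iff_integrableOn_Ioo_of_le ht.le).1 hint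
  · filter_upwards [ae_restrict_mem measurableSet_Ioo] with x hx
    exact mul_nonneg (Real.rpow_nonneg hx.1.le _) (Real.rpow_nonneg (sub_nonneg.2 hx.2.le) _)

def solidSimplex (n : ℕ) (t : ℝ) : Set (Fin n → ℝ) :=
  {s | (∀ i, 0 ≤ s i) ∧ ∑ i, s i ≤ t}

namespace solidSimplex

theorem measurableSet (n : ℕ) (t : ℝ) : MeasurableSet (solidSimplex n t) := by
  unfold solidSimplex
  measurability

variable {n : ℕ} {t : ℝ}

theorem eq_empty (ht : t < 0) : solidSimplex n t = ∅ :=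
  eq_empty_of_forall_notMem fun _ hs =>
    ht.not_ge <| (Finset.sum_nonneg fun i _ => hs.1 i).trans hs.2

theorem eq_univ_of_zero (ht : 0 ≤ t) : solidSimplex 0 t = univ :=
  eq_univ_of_forall fun _ => ⟨finZeroElim, by simpa using ht⟩

theorem cons_mem {x : ℝ} {p : Fin n → ℝ} :
    Fin.cons x p ∈ solidSimplex (n + 1) t ↔ 0 ≤ x ∧ p ∈ solidSimplex n (t - x) := by
  simp only [solidSimplex, mem_ofPred_eq, Fin.forall_fin_succ, Fin.sum_univ_succ, Fin.cons_zero,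
    Fin.cons_succ, le_sub_iff_add_le']
  tauto

theorem pi_Icc_inter_sum_le :
    univ.pi (fun _ : Fin n => Icc 0 t) ∩ {s | ∑ i, s i ≤ t} = solidSimplex n t := by
  ext s
  simp only [solidSimplex, mem_inter_iff, mem_univ_pi, mem_Icc, mem_ofPred_eq, forall_and]
  exact ⟨fun h => ⟨h.1.1, h.2⟩, fun h => ⟨⟨h.1, fun i =>
    (Finset.single_le_sum (fun j _ => h.1 j) (Finset.mem_univ i)).trans h.2⟩, h.2⟩⟩

end solidSimplex

section Dirichlet

variable {n : ℕ}

noncomputable def dirichletDensity (α : Fin n → ℝ) (s : Fin n → ℝ) : ℝ≥0∞ :=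
  ∏ i, ENNReal.ofReal (s i ^ (α i - 1))

theorem measurable_dirichletDensity (α : Fin n → ℝ) : Measurable (dirichletDensity α) :=
  Finset.measurable_prod _ fun _ _ => by fun_prop

theorem dirichletDensity_cons (α : Fin (n + 1) → ℝ) (x : ℝ) (p : Fin n → ℝ) :
    dirichletDensity α (Fin.cons x p)
      = ENNReal.ofReal (x ^ (α 0 - 1)) * dirichletDensity (Fin.tail α) p := by
  simp [dirichletDensity, Fin.prod_univ_succ, Fin.tail]

theorem indicator_solidSimplex_cons (α : Fin (n + 1) → ℝ) (t x : ℝ) (p : Fin n → ℝ) :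
    (solidSimplex (n + 1) t).indicator (dirichletDensity α) (Fin.cons x p)
      = (Ici 0).indicator (fun x => ENNReal.ofReal (x ^ (α 0 - 1))) x *
        (solidSimplex n (t - x)).indicator (dirichletDensity (Fin.tail α)) p := by
  by_cases hx : 0 ≤ x
  · by_cases hp : p ∈ solidSimplex n (t - x)
    · simp [indicator_of_mem (solidSimplex.cons_mem.2 ⟨hx, hp⟩), hx, hp, dirichletDensity_cons]
    · simp [indicator_of_notMem (fun h => hp (solidSimplex.cons_mem.1 h).2), hp]
  · simp [indicator_of_notMem (fun h => hx (solidSimplex.cons_mem.1 h).1), hx]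

noncomputable def dirichletIntegral (α : Fin n → ℝ) (t : ℝ) : ℝ≥0∞ :=
  ∫⁻ s in solidSimplex n t, dirichletDensity α s

theorem dirichletIntegral_of_neg (α : Fin n → ℝ) {t : ℝ} (ht : t < 0) :
    dirichletIntegral α t = 0 := by
  simp [dirichletIntegral, solidSimplex.eq_empty ht]

theorem dirichletIntegral_succ (α : Fin (n + 1) → ℝ) (t : ℝ) :
    dirichletIntegral α t = ∫⁻ x in Ici 0,
      ENNReal.ofReal (x ^ (α 0 - 1)) * dirichletIntegral (Fin.tail α) (t - x) := by
  have hmp :=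
    (measurePreserving_piFinSuccAbove (fun _ : Fin (n + 1) => (volume : Measure ℝ)) 0).symm
  have hF := (measurable_dirichletDensity α).indicator (solidSimplex.measurableSet (n + 1) t)
  have hcons : ∀ x p, (MeasurableEquiv.piFinSuccAbove (fun _ : Fin (n + 1) => ℝ) 0).symm (x, p)
      = Fin.cons x p := fun x p => by
    simp [MeasurableEquiv.piFinSuccAbove_symm_apply, Fin.insertNthEquiv, Fin.insertNth_zero']
  rw [dirichletIntegral, ← lintegral_indicator (solidSimplex.measurableSet _ _), volume_pi,
    ← hmp.lintegral_comp hF, lintegral_prod _ (by exact (hF.comp hmp.measurable).aemeasurable),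
    ← lintegral_indicator measurableSet_Ici]
  refine lintegral_congr fun x => ?_
  simp only [hcons, indicator_solidSimplex_cons]
  rw [lintegral_const_mul _ ((measurable_dirichletDensity _).indicator
    (solidSimplex.measurableSet _ _)), lintegral_indicator (solidSimplex.measurableSet _ _),
    ← volume_pi, indicator_mul_left]
  rfl

theorem dirichletIntegral_eq (α : Fin n → ℝ) (hα : ∀ i, 0 < α i) {t : ℝ} (ht : 0 < t) :
    dirichletIntegral α t = ENNReal.ofReal
      (t ^ (∑ i, α i) * (∏ i, Real.Gamma (α i)) / Real.Gamma (∑ i, α i + 1)) := by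
  induction n generalizing t with
  | zero =>
    simp [dirichletIntegral, dirichletDensity, solidSimplex.eq_univ_of_zero ht.le, volume_pi]
  | succ n ih =>
    set a := α 0
    set A := ∑ i, Fin.tail α i
    set C := (∏ i, Real.Gamma (Fin.tail α i)) / Real.Gamma (A + 1)
    have hA : 0 ≤ A := Finset.sum_nonneg fun i _ => (hα _).le
    have hΓA : 0 < Real.Gamma (A + 1) := Real.Gamma_pos_of_pos (by positivity)
    have hC : 0 ≤ C :=
      div_nonneg (Finset.prod_nonneg fun i _ => (Real.Gamma_pos_of_pos (hα _)).le) hΓA.le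
    have hsum : ∑ i, α i = a + A := Fin.sum_univ_succ α
    have hprod : ∏ i, Real.Gamma (α i) = Real.Gamma a * ∏ i, Real.Gamma (Fin.tail α i) :=
      Fin.prod_univ_succ _
    calc dirichletIntegral α t
        = ∫⁻ x in Ici 0, ENNReal.ofReal (x ^ (a - 1)) * dirichletIntegral (Fin.tail α) (t - x) :=
          dirichletIntegral_succ α t
      _ = ∫⁻ x in Ioo 0 t,
            ENNReal.ofReal (x ^ (a - 1)) * dirichletIntegral (Fin.tail α) (t - x) := by
          rw [← lintegral_indicator measurableSet_Ici, ← lintegral_indicator measurableSet_Ioo]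
          refine lintegral_congr_ae ?_
          filter_upwards [Measure.ae_ne volume 0, Measure.ae_ne volume t] with x hx0 hxt
          rcases lt_or_gt_of_ne hx0 with hx | hx
          · simp [hx.not_gt, hx.not_ge]
          rcases lt_or_gt_of_ne hxt with hx' | hx'
          · simp [hx.le, hx, hx']
          · simp [hx.le, hx'.not_gt, dirichletIntegral_of_neg _ (sub_neg.2 hx')]
      _ = ∫⁻ x in Ioo 0 t,
            ENNReal.ofReal C * ENNReal.ofReal (x ^ (a - 1) * (t - x) ^ (A + 1 - 1)) := by
          refine setLIntegral_congr_fun measurableSet_Ioo fun x hx => ?_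
          rw [ih (Fin.tail α) (fun i => hα _) (sub_pos.2 hx.2),
            ← ENNReal.ofReal_mul (Real.rpow_nonneg hx.1.le _), ← ENNReal.ofReal_mul hC]
          congr 1
          simp only [C, A, add_sub_cancel_right]
          ring
      _ = ENNReal.ofReal C *
            ENNReal.ofReal (t ^ (a + (A + 1) - 1) * ProbabilityTheory.beta a (A + 1)) := by
          rw [lintegral_const_mul _ (by fun_prop),
            setLIntegral_Ioo_rpow_mul_sub_rpow (hα 0) (by positivity) ht]
      _ = _ := by
          rw [← ENNReal.ofReal_mul hC, hsum, hprod, ProbabilityTheory.beta]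
          congr 1
          simp only [C]
          field_simp
          ring_nf

end Dirichlet

theorem aFun_eq_toReal_dirichletIntegral (n : ℕ) (t : ℝ) :
    aFun n t = (dirichletIntegral (fun _ : Fin n => (1 / 2 : ℝ)) t).toReal := by
  have hsum : MeasurableSet {s : Fin n → ℝ | ∑ i, s i ≤ t} :=
    measurableSet_le (Finset.measurable_sum _ fun i _ => measurable_pi_apply i) measurable_const
  have hind : (fun s : Fin n → ℝ => if ∑ i, s i ≤ t then ∏ i, s i ^ (-(1 : ℝ) / 2) else 0)
      = {s | ∑ i, s i ≤ t}.indicator fun s => ∏ i, s i ^ (-(1 : ℝ) / 2) := by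
    ext s
    simp [indicator_apply]
  rw [aFun, hind, setIntegral_indicator hsum, solidSimplex.pi_Icc_inter_sum_le,
    integral_eq_lintegral_of_nonneg_ae]
  · congr 1
    refine setLIntegral_congr_fun (solidSimplex.measurableSet n t) fun s hs => ?_
    rw [ENNReal.ofReal_prod_of_nonneg fun i _ => Real.rpow_nonneg (hs.1 i) _, dirichletDensity]
    norm_num
  · filter_upwards [ae_restrict_mem (solidSimplex.measurableSet n t)] with s hs
    exact Finset.prod_nonneg fun i _ => Real.rpow_nonneg (hs.1 i) _
  · exact (Finset.measurable_prod _ fun i _ => by fun_prop).aestronglyMeasurable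

theorem aFun_eq_general (n : ℕ) (t : ℝ) (ht : 0 < t) :
    aFun n t = Real.pi ^ ((n : ℝ) / 2) * t ^ ((n : ℝ) / 2) / Real.Gamma ((n : ℝ) / 2 + 1) := by
  rw [aFun_eq_toReal_dirichletIntegral, dirichletIntegral_eq _ (fun _ => one_half_pos) ht,
    ENNReal.toReal_ofReal (by positivity)]
  simp only [Finset.sum_const, Finset.card_univ, Fintype.card_fin, nsmul_eq_mul,
    Finset.prod_const, Real.Gamma_one_half_eq, Real.rpow_div_two_eq_sqrt _ Real.pi_pos.le,
    Real.rpow_natCast]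
  ring_nf

/-- **Exact value:** `a_n(t) = π^{n/2} t^{n/2} / Γ(n/2 + 1)` for every `n ≥ 1`, `t > 0`. -/
theorem aFun_eq (n : ℕ) (hn : 1 ≤ n) (t : ℝ) (ht : 0 < t) :
    aFun n t = Real.pi ^ ((n : ℝ) / 2) * t ^ ((n : ℝ) / 2) / Real.Gamma ((n : ℝ) / 2 + 1) :=
  aFun_eq_general n t ht
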